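/- arXiv:1303.4244 — 5 statements merged into one kernel-verified Lean document; each statement's English description precedes it below -/
import Mathlib

section
/- Let 0 < p < 1 and q = 1 − p, and let f̃, g̃ : ℂ → ℂ be entire functions satisfying f̃(z) = f̃(pz) + f̃(qz) + g̃(z) for all z ∈ ℂ. Then f̃ is JS-admissible if and only if g̃ is JS-admissible. -/
/-!
Both directions go through a normal form of admissibility: a polynomial bound on the whole cone
`|arg z| ≤ θ`, and `|e^z f(z)| ≤ C e^{(1-ε)|z|}` on the whole complementary sector with
`ε < 1 - cos θ`. These bounds survive `z ↦ r z` for `0 < r ≤ 1` (in the sector because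
`Re z ≤ cos θ |z|` makes `e^{(1-r) z}` small), so `g = f - f(p ·) - f(q ·)` inherits them.
Conversely, `f(z) = f(pz) + f(qz) + g(z)` propagates a bound for `f` from `|z| ≤ R` outwards,
shell by shell of ratio `max p q`: on the cone a large exponent makes the contributions of `f(pz)`
and `f(qz)` small, in the sector the factor `e^{-(1-r)(1-ε-cos θ)|z|}` does.
-/

open Filter Set

noncomputable section

/-- An entire function `f` is JS-admissible with parameters `(α, β)`. -/
def JSAdmissibleWith (f : ℂ → ℂ) (α β : ℝ) : Prop :=
  ∃ θ ∈ Set.Ioo (0 : ℝ) (Real.pi / 2), ∃ ε > (0 : ℝ), ∃ C > (0 : ℝ),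
    (∀ z : ℂ, 1 ≤ ‖z‖ → |Complex.arg z| ≤ θ →
      ‖f z‖ ≤ C * ‖z‖ ^ α * Real.log (1 + ‖z‖) ^ β) ∧
    (∀ z : ℂ, 1 ≤ ‖z‖ → θ ≤ |Complex.arg z| →
      ‖Complex.exp z * f z‖ ≤ C * Real.exp ((1 - ε) * ‖z‖))

/-- An entire function `f` is JS-admissible. -/
def JSAdmissible (f : ℂ → ℂ) : Prop := ∃ α β : ℝ, JSAdmissibleWith f α β

/- A normal form of JS-admissibility for continuous functions. Unlike the bounds in
`JSAdmissibleWith`, these hold on the whole region down to the origin, which makes them stable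
under the contractions `z ↦ r * z`, `0 < r ≤ 1`. -/
def ConePolyBound (f : ℂ → ℂ) (θ α : ℝ) : Prop :=
  ∃ C ≥ (0 : ℝ), ∀ z : ℂ, |Complex.arg z| ≤ θ → ‖f z‖ ≤ C * (max 1 ‖z‖) ^ α

def SectorExpBound (f : ℂ → ℂ) (θ ε : ℝ) : Prop :=
  ∃ C ≥ (0 : ℝ), ∀ z : ℂ, θ ≤ |Complex.arg z| →
    ‖Complex.exp z * f z‖ ≤ C * Real.exp ((1 - ε) * ‖z‖)

theorem re_le_cos_mul_norm {z : ℂ} {θ : ℝ} (hθ : 0 ≤ θ) (hz : θ ≤ |z.arg|) :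
    z.re ≤ Real.cos θ * ‖z‖ :=
  calc z.re = ‖z‖ * Real.cos |z.arg| := by rw [Real.cos_abs, Complex.norm_mul_cos_arg]
    _ ≤ ‖z‖ * Real.cos θ := mul_le_mul_of_nonneg_left
        (Real.cos_le_cos_of_nonneg_of_le_pi hθ (Complex.abs_arg_le_pi z) hz) (norm_nonneg z)
    _ = Real.cos θ * ‖z‖ := mul_comm _ _

theorem norm_ofReal_mul {r : ℝ} (hr : 0 ≤ r) (z : ℂ) : ‖(r : ℂ) * z‖ = r * ‖z‖ := by
  rw [norm_mul, Complex.norm_real, Real.norm_of_nonneg hr]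

theorem log_one_add_rpow_le {x : ℝ} (hx : 1 ≤ x) (β : ℝ) :
    Real.log (1 + x) ^ β ≤ max 1 (Real.log 2 ^ β) * x ^ |β| := by
  have hlog2 : 0 < Real.log 2 := Real.log_pos one_lt_two
  have hlog : Real.log 2 ≤ Real.log (1 + x) := Real.log_le_log two_pos (by linarith)
  rcases le_or_gt 0 β with hβ | hβ
  · have hlog_le : Real.log (1 + x) ≤ x := by
      linarith [Real.log_le_sub_one_of_pos (by linarith : (0 : ℝ) < 1 + x)]
    calc Real.log (1 + x) ^ β ≤ x ^ β := Real.rpow_le_rpow (hlog2.le.trans hlog) hlog_le hβ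
      _ = 1 * x ^ |β| := by rw [abs_of_nonneg hβ, one_mul]
      _ ≤ max 1 (Real.log 2 ^ β) * x ^ |β| :=
        mul_le_mul_of_nonneg_right (le_max_left _ _) (by positivity)
  · calc Real.log (1 + x) ^ β ≤ Real.log 2 ^ β := Real.rpow_le_rpow_of_nonpos hlog2 hlog hβ.le
      _ ≤ max 1 (Real.log 2 ^ β) := le_max_right _ _
      _ ≤ max 1 (Real.log 2 ^ β) * x ^ |β| :=
        le_mul_of_one_le_right (by positivity) (Real.one_le_rpow hx (abs_nonneg β))

theorem exists_rpow_mul_log_rpow_le (α β : ℝ) :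
    ∃ γ ≥ (0 : ℝ), ∃ K, ∀ x ≥ 1, x ^ α * Real.log (1 + x) ^ β ≤ K * x ^ γ := by
  refine ⟨|α| + |β|, by positivity, max 1 (Real.log 2 ^ β), fun x hx => ?_⟩
  calc x ^ α * Real.log (1 + x) ^ β ≤ x ^ |α| * (max 1 (Real.log 2 ^ β) * x ^ |β|) :=
        mul_le_mul (Real.rpow_le_rpow_of_exponent_le hx (le_abs_self α))
          (log_one_add_rpow_le hx β) (Real.rpow_nonneg (Real.log_nonneg (by linarith)) β)
          (by positivity)
    _ = max 1 (Real.log 2 ^ β) * x ^ (|α| + |β|) := by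
        rw [Real.rpow_add (by linarith)]; ring

theorem exists_rpow_le_of_lt_one {M : ℝ} (hM0 : 0 < M) (hM1 : M < 1) (α : ℝ) {c : ℝ}
    (hc : 0 < c) : ∃ α', α ≤ α' ∧ 0 ≤ α' ∧ M ^ α' ≤ c := by
  obtain ⟨n, hn⟩ := exists_pow_lt_of_lt_one hc hM1
  refine ⟨max α n, le_max_left _ _, le_max_of_le_right n.cast_nonneg, ?_⟩
  calc M ^ max α n ≤ M ^ (n : ℝ) :=
        Real.rpow_le_rpow_of_exponent_ge hM0 hM1.le (le_max_right _ _)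
    _ ≤ c := by rw [Real.rpow_natCast]; exact hn.le

section

variable {E G : Type*} [NormedAddCommGroup E] [ProperSpace E] [SeminormedAddGroup G]
  {F : E → G} {w : E → ℝ}

theorem exists_bound_mul_of_norm_le (hF : Continuous F) (hw : ∀ z, 1 ≤ w z) (R : ℝ) :
    ∃ B ≥ 0, ∀ z, ‖z‖ ≤ R → ‖F z‖ ≤ B * w z := by
  obtain ⟨S, hS⟩ :=
    (isCompact_closedBall (0 : E) R).exists_bound_of_continuousOn hF.continuousOn
  refine ⟨max S 0, le_max_right _ _, fun z hz => ?_⟩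
  calc ‖F z‖ ≤ max S 0 := (hS z (by simpa using hz)).trans (le_max_left _ _)
    _ ≤ max S 0 * w z := le_mul_of_one_le_right (le_max_right _ _) (hw z)

theorem exists_bound_of_bound_of_one_le_norm (hF : Continuous F) (hw : ∀ z, 1 ≤ w z)
    {P : E → Prop} {C : ℝ} (h : ∀ z, P z → 1 ≤ ‖z‖ → ‖F z‖ ≤ C * w z) :
    ∃ C' ≥ 0, ∀ z, P z → ‖F z‖ ≤ C' * w z := by
  obtain ⟨B, hB, hFB⟩ := exists_bound_mul_of_norm_le hF hw 1
  refine ⟨max C B, le_max_of_le_right hB, fun z hz => ?_⟩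
  rcases le_or_gt 1 ‖z‖ with h1 | h1
  · exact (h z hz h1).trans
      (mul_le_mul_of_nonneg_right (le_max_left _ _) (zero_le_one.trans (hw z)))
  · exact (hFB z h1.le).trans
      (mul_le_mul_of_nonneg_right (le_max_right _ _) (zero_le_one.trans (hw z)))

end

theorem forall_of_forall_le_of_step {X : Type*} (N : X → ℝ) {P : X → Prop} {R M : ℝ}
    (hR : 0 < R) (hM0 : 0 ≤ M) (hM1 : M < 1) (base : ∀ x, N x ≤ R → P x)
    (step : ∀ x, R < N x → (∀ y, N y ≤ M * N x → P y) → P x) (x : X) : P x := by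
  have key : ∀ n : ℕ, ∀ x, M ^ n * N x ≤ R → P x := by
    intro n
    induction n with
    | zero => simpa using base
    | succ n ih =>
      intro x hx
      rcases le_or_gt (N x) R with hxR | hxR
      · exact base x hxR
      refine step x hxR fun y hy => ih y ?_
      calc M ^ n * N y ≤ M ^ n * (M * N x) := mul_le_mul_of_nonneg_left hy (by positivity)
        _ = M ^ (n + 1) * N x := by ring
        _ ≤ R := hx
  rcases le_or_gt (N x) R with hxR | hxR
  · exact base x hxR
  have hx0 : 0 < N x := hR.trans hxR
  obtain ⟨n, hn⟩ := exists_pow_lt_of_lt_one (div_pos hR hx0) hM1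
  exact key n x ((lt_div_iff₀ hx0).1 hn).le

theorem norm_exp_mul_le_of_norm_exp_ofReal_mul_mul_le {z w : ℂ} {r c ε K : ℝ} (hr0 : 0 ≤ r)
    (hr1 : r ≤ 1) (hz : z.re ≤ c * ‖z‖)
    (h : ‖Complex.exp (r * z) * w‖ ≤ K * Real.exp ((1 - ε) * ‖(r : ℂ) * z‖)) :
    ‖Complex.exp z * w‖ ≤ K * Real.exp ((1 - ε) * ‖z‖ - (1 - r) * (1 - ε - c) * ‖z‖) := by
  have hsplit : Complex.exp z * w = Complex.exp ((1 - r : ℝ) * z) * (Complex.exp (r * z) * w) := by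
    rw [← mul_assoc, ← Complex.exp_add]; push_cast; ring_nf
  rw [norm_ofReal_mul hr0] at h
  calc ‖Complex.exp z * w‖ = Real.exp ((1 - r) * z.re) * ‖Complex.exp (r * z) * w‖ := by
        rw [hsplit, norm_mul, Complex.norm_exp, Complex.re_ofReal_mul]
    _ ≤ Real.exp ((1 - r) * (c * ‖z‖)) * (K * Real.exp ((1 - ε) * (r * ‖z‖))) :=
        mul_le_mul (Real.exp_le_exp.2 (mul_le_mul_of_nonneg_left hz (by linarith))) h
          (norm_nonneg _) (Real.exp_nonneg _)
    _ = K * Real.exp ((1 - r) * (c * ‖z‖) + (1 - ε) * (r * ‖z‖)) := by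
        rw [Real.exp_add]; ring
    _ = K * Real.exp ((1 - ε) * ‖z‖ - (1 - r) * (1 - ε - c) * ‖z‖) := by ring_nf

theorem norm_exp_mul_le_of_le_norm {z w : ℂ} {r M c ε K R : ℝ} (hr0 : 0 ≤ r) (hrM : r ≤ M)
    (hM1 : M ≤ 1) (hεc : ε + c ≤ 1) (hK : 0 ≤ K) (hR : R ≤ ‖z‖) (hz : z.re ≤ c * ‖z‖)
    (h : ‖Complex.exp (r * z) * w‖ ≤ K * Real.exp ((1 - ε) * ‖(r : ℂ) * z‖)) :
    ‖Complex.exp z * w‖ ≤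
      K * Real.exp (-((1 - M) * (1 - ε - c) * R)) * Real.exp ((1 - ε) * ‖z‖) := by
  have hgain : (1 - M) * (1 - ε - c) * R ≤ (1 - r) * (1 - ε - c) * ‖z‖ :=
    calc (1 - M) * (1 - ε - c) * R ≤ (1 - M) * (1 - ε - c) * ‖z‖ :=
          mul_le_mul_of_nonneg_left hR (mul_nonneg (by linarith) (by linarith))
      _ ≤ (1 - r) * (1 - ε - c) * ‖z‖ := by gcongr; linarith
  calc ‖Complex.exp z * w‖ ≤ K * Real.exp ((1 - ε) * ‖z‖ - (1 - r) * (1 - ε - c) * ‖z‖) :=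
        norm_exp_mul_le_of_norm_exp_ofReal_mul_mul_le hr0 (hrM.trans hM1) hz h
    _ ≤ K * Real.exp (-((1 - M) * (1 - ε - c) * R) + (1 - ε) * ‖z‖) := by gcongr; linarith
    _ = K * Real.exp (-((1 - M) * (1 - ε - c) * R)) * Real.exp ((1 - ε) * ‖z‖) := by
        rw [Real.exp_add]; ring

section

variable {f g : ℂ → ℂ} {p q θ α ε r : ℝ}

theorem ConePolyBound.sub (hf : ConePolyBound f θ α) (hg : ConePolyBound g θ α) :
    ConePolyBound (f - g) θ α := by
  obtain ⟨C, hC, hf⟩ := hf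
  obtain ⟨D, hD, hg⟩ := hg
  refine ⟨C + D, add_nonneg hC hD, fun z hz => ?_⟩
  calc ‖(f - g) z‖ ≤ ‖f z‖ + ‖g z‖ := norm_sub_le _ _
    _ ≤ C * (max 1 ‖z‖) ^ α + D * (max 1 ‖z‖) ^ α := add_le_add (hf z hz) (hg z hz)
    _ = (C + D) * (max 1 ‖z‖) ^ α := (add_mul _ _ _).symm

theorem SectorExpBound.sub (hf : SectorExpBound f θ ε) (hg : SectorExpBound g θ ε) :
    SectorExpBound (f - g) θ ε := by
  obtain ⟨C, hC, hf⟩ := hf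
  obtain ⟨D, hD, hg⟩ := hg
  refine ⟨C + D, add_nonneg hC hD, fun z hz => ?_⟩
  calc ‖Complex.exp z * (f - g) z‖ ≤ ‖Complex.exp z * f z‖ + ‖Complex.exp z * g z‖ := by
        rw [Pi.sub_apply, mul_sub]; exact norm_sub_le _ _
    _ ≤ C * Real.exp ((1 - ε) * ‖z‖) + D * Real.exp ((1 - ε) * ‖z‖) :=
        add_le_add (hf z hz) (hg z hz)
    _ = (C + D) * Real.exp ((1 - ε) * ‖z‖) := (add_mul _ _ _).symm

theorem ConePolyBound.comp_ofReal_mul (h : ConePolyBound f θ α) (hα : 0 ≤ α) (hr0 : 0 < r)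
    (hr1 : r ≤ 1) : ConePolyBound (fun z => f (r * z)) θ α := by
  obtain ⟨C, hC, hf⟩ := h
  refine ⟨C, hC, fun z hz => (hf _ (by rwa [Complex.arg_real_mul z hr0])).trans ?_⟩
  rw [norm_ofReal_mul hr0.le]
  gcongr
  exact mul_le_of_le_one_left (norm_nonneg z) hr1

theorem SectorExpBound.comp_ofReal_mul (h : SectorExpBound f θ ε) (hθ : 0 ≤ θ)
    (hε : ε ≤ 1 - Real.cos θ) (hr0 : 0 < r) (hr1 : r ≤ 1) :
    SectorExpBound (fun z => f (r * z)) θ ε := by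
  obtain ⟨C, hC, hf⟩ := h
  refine ⟨C, hC, fun z hz => ?_⟩
  have hrz := hf (r * z) (by rwa [Complex.arg_real_mul z hr0])
  refine (norm_exp_mul_le_of_norm_exp_ofReal_mul_mul_le hr0.le hr1
    (re_le_cos_mul_norm hθ hz) hrz).trans ?_
  gcongr
  have : 0 ≤ (1 - r) * (1 - ε - Real.cos θ) * ‖z‖ :=
    mul_nonneg (mul_nonneg (by linarith) (by linarith)) (norm_nonneg z)
  linarith

theorem ConePolyBound.exists_of_functional_equation (hf : Continuous f) (hp : p ∈ Ioo 0 1)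
    (hq : q ∈ Ioo 0 1) (hfe : ∀ z, f z = f (p * z) + f (q * z) + g z)
    (hg : ConePolyBound g θ α) : ∃ α' ≥ (0 : ℝ), ConePolyBound f θ α' := by
  obtain ⟨C, hC, hgC⟩ := hg
  set M := max p q
  have hM0 : 0 < M := lt_max_of_lt_left hp.1
  have hM1 : M < 1 := max_lt hp.2 hq.2
  -- `α'` is large enough that each of `f (p z)`, `f (q z)` costs at most a quarter of the bound
  obtain ⟨α', hαα', hα', hMα'⟩ := exists_rpow_le_of_lt_one hM0 hM1 α (by norm_num : (0 : ℝ) < 1 / 4)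
  have hw : ∀ z : ℂ, 1 ≤ (max 1 ‖z‖) ^ α' := fun z => Real.one_le_rpow (le_max_left _ _) hα'
  obtain ⟨S, hS, hfS⟩ := exists_bound_mul_of_norm_le hf hw M⁻¹
  set B := max S (2 * C)
  have hB : 0 ≤ B := le_max_of_le_left hS
  refine ⟨α', hα', B, hB, forall_of_forall_le_of_step (‖·‖) (inv_pos.2 hM0) hM0.le hM1
    (fun z hz _ => ?_) (fun z hz ih harg => ?_)⟩
  · exact (hfS z hz).trans (mul_le_mul_of_nonneg_right (le_max_left _ _) (zero_le_one.trans (hw z)))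
  have hz1 : 1 ≤ M * ‖z‖ := by simpa [hM0.ne'] using mul_le_mul_of_nonneg_left hz.le hM0.le
  have hz1' : 1 ≤ ‖z‖ := hz1.trans (mul_le_of_le_one_left (norm_nonneg z) hM1.le)
  have hscaled : ∀ r : ℝ, 0 < r → r ≤ M → ‖f (r * z)‖ ≤ B / 4 * ‖z‖ ^ α' := by
    intro r hr hrM
    have hrz : ‖(r : ℂ) * z‖ ≤ M * ‖z‖ := by
      rw [norm_ofReal_mul hr.le]; exact mul_le_mul_of_nonneg_right hrM (norm_nonneg z)
    calc ‖f (r * z)‖ ≤ B * (max 1 ‖(r : ℂ) * z‖) ^ α' :=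
          ih _ hrz (by rwa [Complex.arg_real_mul z hr])
      _ ≤ B * (M * ‖z‖) ^ α' := by gcongr; exact max_le hz1 hrz
      _ = B * M ^ α' * ‖z‖ ^ α' := by rw [Real.mul_rpow hM0.le (norm_nonneg z)]; ring
      _ ≤ B * (1 / 4) * ‖z‖ ^ α' := by gcongr
      _ = B / 4 * ‖z‖ ^ α' := by ring
  have hgz : ‖g z‖ ≤ B / 2 * ‖z‖ ^ α' :=
    calc ‖g z‖ ≤ C * ‖z‖ ^ α := by simpa [max_eq_right hz1'] using hgC z harg
      _ ≤ C * ‖z‖ ^ α' :=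
        mul_le_mul_of_nonneg_left (Real.rpow_le_rpow_of_exponent_le hz1' hαα') hC
      _ ≤ B / 2 * ‖z‖ ^ α' := by gcongr; linarith [le_max_right S (2 * C)]
  rw [max_eq_right hz1', hfe z]
  linarith [norm_add₃_le (a := f (p * z)) (b := f (q * z)) (c := g z),
    hscaled p hp.1 (le_max_left _ _), hscaled q hq.1 (le_max_right _ _)]

theorem SectorExpBound.of_functional_equation (hf : Continuous f) (hp : p ∈ Ioo 0 1)
    (hq : q ∈ Ioo 0 1) (hθ : θ ∈ Icc 0 (Real.pi / 2)) (hε : ε < 1 - Real.cos θ)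
    (hfe : ∀ z, f z = f (p * z) + f (q * z) + g z) (hg : SectorExpBound g θ ε) :
    SectorExpBound f θ ε := by
  obtain ⟨C, hC, hgC⟩ := hg
  set M := max p q
  have hM1 : M < 1 := max_lt hp.2 hq.2
  have hcos : 0 ≤ Real.cos θ :=
    Real.cos_nonneg_of_mem_Icc ⟨by linarith [hθ.1, Real.pi_pos], hθ.2⟩
  have hε1 : ε < 1 := by linarith
  -- beyond radius `R`, passing from `r z` to `z` gains the factor `exp (-δ R) = 1 / 4`
  set δ := (1 - M) * (1 - ε - Real.cos θ)
  have hδ : 0 < δ := mul_pos (by linarith) (by linarith)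
  set R := Real.log 4 / δ
  have hR : 0 < R := div_pos (Real.log_pos (by norm_num)) hδ
  have hδR : Real.exp (-(δ * R)) = 1 / 4 := by
    rw [mul_div_cancel₀ _ hδ.ne', Real.exp_neg, Real.exp_log (by norm_num)]; norm_num
  obtain ⟨S, hS, hfS⟩ := exists_bound_mul_of_norm_le (Complex.continuous_exp.mul hf)
    (w := fun z => Real.exp ((1 - ε) * ‖z‖))
    (fun z => Real.one_le_exp (mul_nonneg (by linarith) (norm_nonneg z))) R
  set B := max S (2 * C)
  have hB : 0 ≤ B := le_max_of_le_left hS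
  refine ⟨B, hB, forall_of_forall_le_of_step (‖·‖) hR (le_max_of_le_left hp.1.le) hM1
    (fun z hz _ => ?_) (fun z hz ih harg => ?_)⟩
  · exact (hfS z hz).trans (mul_le_mul_of_nonneg_right (le_max_left _ _) (Real.exp_nonneg _))
  have hscaled : ∀ r : ℝ, 0 < r → r ≤ M →
      ‖Complex.exp z * f (r * z)‖ ≤ B / 4 * Real.exp ((1 - ε) * ‖z‖) := by
    intro r hr hrM
    have hrz : ‖(r : ℂ) * z‖ ≤ M * ‖z‖ := by
      rw [norm_ofReal_mul hr.le]; exact mul_le_mul_of_nonneg_right hrM (norm_nonneg z)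
    calc ‖Complex.exp z * f (r * z)‖
        ≤ B * Real.exp (-(δ * R)) * Real.exp ((1 - ε) * ‖z‖) :=
          norm_exp_mul_le_of_le_norm hr.le hrM hM1.le (by linarith) hB hz.le
            (re_le_cos_mul_norm hθ.1 harg) (ih _ hrz (by rwa [Complex.arg_real_mul z hr]))
      _ = B / 4 * Real.exp ((1 - ε) * ‖z‖) := by rw [hδR]; ring
  have hgz : ‖Complex.exp z * g z‖ ≤ B / 2 * Real.exp ((1 - ε) * ‖z‖) :=
    (hgC z harg).trans (by gcongr; linarith [le_max_right S (2 * C)])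
  rw [hfe z, mul_add, mul_add]
  linarith [norm_add₃_le (a := Complex.exp z * f (p * z)) (b := Complex.exp z * f (q * z))
    (c := Complex.exp z * g z), hscaled p hp.1 (le_max_left _ _), hscaled q hq.1 (le_max_right _ _)]

end

theorem jsAdmissible_iff {f : ℂ → ℂ} (hf : Continuous f) :
    JSAdmissible f ↔ ∃ θ ∈ Ioo 0 (Real.pi / 2), ∃ α ≥ (0 : ℝ), ∃ ε ∈ Ioo 0 (1 - Real.cos θ),
      ConePolyBound f θ α ∧ SectorExpBound f θ ε := by
  constructor
  · rintro ⟨α, β, θ, hθ, ε, hε, C, hC, hcone, hsector⟩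
    obtain ⟨γ, hγ, K, hK⟩ := exists_rpow_mul_log_rpow_le α β
    have hcos : Real.cos θ < 1 := by
      simpa using Real.cos_lt_cos_of_nonneg_of_le_pi le_rfl (by linarith [hθ.2, Real.pi_pos]) hθ.1
    set ε' := min ε ((1 - Real.cos θ) / 2)
    have hε' : ε' ∈ Ioo 0 (1 - Real.cos θ) :=
      ⟨lt_min hε (by linarith), (min_le_right _ _).trans_lt (by linarith)⟩
    have hε'1 : ε' ≤ 1 := hε'.2.le.trans
      (by linarith [Real.cos_nonneg_of_mem_Icc ⟨by linarith [hθ.1, Real.pi_pos], hθ.2.le⟩])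
    refine ⟨θ, hθ, γ, hγ, ε', hε', ?_, ?_⟩
    · refine exists_bound_of_bound_of_one_le_norm hf
        (fun z => Real.one_le_rpow (le_max_left 1 ‖z‖) hγ) (C := C * K) fun z hz h1 => ?_
      calc ‖f z‖ ≤ C * (‖z‖ ^ α * Real.log (1 + ‖z‖) ^ β) := by
            rw [← mul_assoc]; exact hcone z h1 hz
        _ ≤ C * (K * ‖z‖ ^ γ) := mul_le_mul_of_nonneg_left (hK _ h1) hC.le
        _ = C * K * (max 1 ‖z‖) ^ γ := by rw [max_eq_right h1]; ring
    · refine exists_bound_of_bound_of_one_le_norm (Complex.continuous_exp.mul hf)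
        (fun z => Real.one_le_exp (mul_nonneg (by linarith) (norm_nonneg z))) (C := C)
        fun z hz h1 => ?_
      exact (hsector z h1 hz).trans (by gcongr; exact min_le_left _ _)
  · rintro ⟨θ, hθ, α, -, ε, hε, ⟨C, hC, hcone⟩, ⟨D, hD, hsector⟩⟩
    refine ⟨α, 0, θ, hθ, ε, hε.1, C + D + 1, by positivity, fun z h1 hz => ?_, fun z h1 hz => ?_⟩
    · calc ‖f z‖ ≤ C * ‖z‖ ^ α := by simpa [max_eq_right h1] using hcone z hz
        _ ≤ (C + D + 1) * ‖z‖ ^ α * Real.log (1 + ‖z‖) ^ (0 : ℝ) := by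
          rw [Real.rpow_zero, mul_one]; gcongr; linarith
    · exact (hsector z hz).trans (by gcongr; linarith)

/-- for entire `f`, `g` satisfying the trie functional equation
`f(z) = f(pz) + f(qz) + g(z)`, `f` is JS-admissible iff `g` is. -/
theorem js_admissible_transfer (p q : ℝ) (hp : 0 < p) (hp1 : p < 1) (hq : q = 1 - p)
    (f g : ℂ → ℂ) (hf : Differentiable ℂ f) (hg : Differentiable ℂ g)
    (hfe : ∀ z : ℂ, f z = f ((p : ℂ) * z) + f ((q : ℂ) * z) + g z) :
    JSAdmissible f ↔ JSAdmissible g := by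
  have hp' : p ∈ Ioo 0 1 := ⟨hp, hp1⟩
  have hq' : q ∈ Ioo 0 1 := ⟨by linarith, by linarith⟩
  rw [jsAdmissible_iff hf.continuous, jsAdmissible_iff hg.continuous]
  constructor
  · rintro ⟨θ, hθ, α, hα, ε, hε, hcone, hsector⟩
    have hg_eq : g = f - (fun z => f (p * z)) - (fun z => f (q * z)) := by
      funext z; rw [Pi.sub_apply, Pi.sub_apply, hfe z]; ring
    refine ⟨θ, hθ, α, hα, ε, hε, hg_eq ▸ ?_, hg_eq ▸ ?_⟩
    · exact (hcone.sub (hcone.comp_ofReal_mul hα hp hp1.le)).sub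
        (hcone.comp_ofReal_mul hα hq'.1 hq'.2.le)
    · exact (hsector.sub (hsector.comp_ofReal_mul hθ.1.le hε.2.le hp hp1.le)).sub
        (hsector.comp_ofReal_mul hθ.1.le hε.2.le hq'.1 hq'.2.le)
  · rintro ⟨θ, hθ, α, -, ε, hε, hcone, hsector⟩
    obtain ⟨α', hα', hcone'⟩ := hcone.exists_of_functional_equation hf.continuous hp' hq' hfe
    exact ⟨θ, hθ, α', hα', ε, hε, hcone', hsector.of_functional_equation hf.continuous hp' hq'
      ⟨hθ.1.le, hθ.2.le⟩ hε.2 hfe⟩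

end
end

section
/- Let 0 < p < 1, q = 1 − p, α ∈ ℝ, β ≥ 0 and C ≥ 0. Suppose K : (0, ∞) → [0, ∞) is bounded on (0, 1] and satisfies K(r) ≤ K(pr) + K(qr) + C·(r^α·(log(1+r))^β + 1) for all r ≥ 1. Then, as r → ∞: K(r) = O(r) if α < 1; K(r) = O(r·(log r)^{β+1}) if α = 1; and K(r) = O(r^α·(log r)^β) if α > 1. -/
open Filter Set Asymptotics

noncomputable section

/-!
Bounds propagate through the recursion by a comparison principle: if `ψ ≥ 0` satisfies
`ψ (p r) + ψ (q r) + ε h r ≤ ψ r` for large `r`, where `h` is bounded below and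
`C (r ^ α log (1 + r) ^ β + 1) = O(h)`, then a constant plus a multiple of `ψ` dominates `K`, by
induction along the contraction `r ↦ max p q * r` (the same induction shows first that `K` is
bounded on every `(0, T]`). The supersolutions are
* `α < 1`: `ψ r = r - r ^ γ + 1` with `max α 0 < γ < 1`, because `p ^ γ + q ^ γ > 1`;
* `α = 1`: `ψ r = r * log (1 + r) ^ (β + 1)`, because `log (1 + c r) ≤ log (1 + r) - δ` for
  `c ≤ max p q` and `r ≥ 1`, with `δ = log (2 / (1 + max p q)) > 0`;
* `α > 1`: `ψ r = r ^ α * log (1 + r) ^ β`, because `p ^ α + q ^ α < 1`.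
-/

theorem forall_of_antitone_of_le_div {Q : ℝ → Prop} {m r₀ : ℝ} (hm0 : 0 < m) (hm1 : m < 1)
    (hr₀ : 0 < r₀) (hQ : Antitone Q) (h₀ : Q r₀) (hstep : ∀ T, r₀ ≤ T → Q T → Q (T / m))
    (T : ℝ) : Q T := by
  have hpow : ∀ n : ℕ, r₀ ≤ r₀ / m ^ n ∧ Q (r₀ / m ^ n) := by
    intro n
    induction n with
    | zero => simpa using h₀
    | succ n ih =>
      refine ⟨?_, by simpa [pow_succ, div_div] using hstep _ ih.1 ih.2⟩
      rw [le_div_iff₀ (by positivity)]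
      exact mul_le_of_le_one_right hr₀.le (pow_le_one₀ hm0.le hm1.le)
  rcases le_or_gt T r₀ with hT | hT
  · exact hQ hT h₀
  obtain ⟨n, hn⟩ := exists_pow_lt_of_lt_one (div_pos hr₀ (hr₀.trans hT)) hm1
  refine hQ ?_ (hpow n).2
  rw [lt_div_iff₀ (hr₀.trans hT)] at hn
  rw [le_div_iff₀ (by positivity)]
  linarith

theorem mul_mem_Ioc_of_mem_Ioc_div {c m r T : ℝ} (hc : 0 < c) (hcm : c ≤ m)
    (hr : r ∈ Ioc 0 (T / m)) : c * r ∈ Ioc 0 T := by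
  refine ⟨mul_pos hc hr.1, ?_⟩
  calc c * r ≤ m * (T / m) := mul_le_mul hcm hr.2 hr.1.le (hc.le.trans hcm)
    _ = T := mul_div_cancel₀ T (hc.trans_le hcm).ne'

theorem forall_pos_of_le_mul_induction {P : ℝ → Prop} {p q r₀ : ℝ} (hp : 0 < p) (hp1 : p < 1)
    (hq : 0 < q) (hq1 : q < 1) (hr₀ : 0 < r₀) (hbase : ∀ r ∈ Ioc 0 r₀, P r)
    (hstep : ∀ r, r₀ < r → P (p * r) → P (q * r) → P r) (r : ℝ) (hr : 0 < r) : P r := by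
  refine forall_of_antitone_of_le_div (Q := fun T => ∀ r ∈ Ioc 0 T, P r)
    (lt_max_of_lt_left hp) (max_lt hp1 hq1) hr₀
    (fun S T hST hT r hr => hT r ⟨hr.1, hr.2.trans hST⟩) hbase ?_ r r ⟨hr, le_rfl⟩
  intro T hT hPT r hr
  rcases le_or_gt r T with hrT | hrT
  · exact hPT r ⟨hr.1, hrT⟩
  exact hstep r (hT.trans_lt hrT) (hPT _ (mul_mem_Ioc_of_mem_Ioc_div hp (le_max_left p q) hr))
    (hPT _ (mul_mem_Ioc_of_mem_Ioc_div hq (le_max_right p q) hr))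

theorem bddAbove_image_Ioc_of_le_add {K g : ℝ → ℝ} {p q : ℝ} (hp : 0 < p) (hp1 : p < 1)
    (hq : 0 < q) (hq1 : q < 1) (hK : BddAbove (K '' Ioc 0 1))
    (hg : ∀ T, BddAbove (g '' Icc 1 T)) (hrec : ∀ r, 1 ≤ r → K r ≤ K (p * r) + K (q * r) + g r)
    (T : ℝ) : BddAbove (K '' Ioc 0 T) := by
  refine forall_of_antitone_of_le_div (Q := fun T => BddAbove (K '' Ioc 0 T))
    (lt_max_of_lt_left hp) (max_lt hp1 hq1) one_pos
    (fun S T hST hT => hT.mono (image_mono (Ioc_subset_Ioc_right hST))) hK ?_ T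
  rintro T hT ⟨B, hB⟩
  obtain ⟨G, hG⟩ := hg (T / max p q)
  refine ⟨max B (2 * B + G), ?_⟩
  rintro _ ⟨r, hr, rfl⟩
  rcases le_or_gt r T with hrT | hrT
  · exact le_max_of_le_left (hB ⟨r, ⟨hr.1, hrT⟩, rfl⟩)
  have hpr := hB ⟨_, mul_mem_Ioc_of_mem_Ioc_div hp (le_max_left p q) hr, rfl⟩
  have hqr := hB ⟨_, mul_mem_Ioc_of_mem_Ioc_div hq (le_max_right p q) hr, rfl⟩
  have hgr := hG ⟨r, ⟨hT.trans hrT.le, hr.2⟩, rfl⟩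
  exact le_max_of_le_right (by linarith [hrec r (hT.trans hrT.le)])

theorem le_add_of_supersolution {K g Ψ : ℝ → ℝ} {p q r₀ M : ℝ} (hp : 0 < p) (hp1 : p < 1)
    (hq : 0 < q) (hq1 : q < 1) (hr₀ : 0 < r₀)
    (hrec : ∀ r, r₀ < r → K r ≤ K (p * r) + K (q * r) + g r)
    (hbase : ∀ r ∈ Ioc 0 r₀, K r ≤ M) (hΨ : ∀ r ∈ Ioc 0 r₀, 0 ≤ Ψ r)
    (hsuper : ∀ r, r₀ < r → Ψ (p * r) + Ψ (q * r) + g r + M ≤ Ψ r) (r : ℝ) (hr : 0 < r) :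
    K r ≤ M + Ψ r :=
  forall_pos_of_le_mul_induction (P := fun r => K r ≤ M + Ψ r) hp hp1 hq hq1 hr₀
    (fun r hr => by linarith [hbase r hr, hΨ r hr])
    (fun r hr hpr hqr => by linarith [hrec r hr, hsuper r hr]) r hr

theorem isBigO_of_le_add_mul {K ψ : ℝ → ℝ} {M A c : ℝ} (hc : 0 < c)
    (hK₀ : ∀ᶠ r in atTop, 0 ≤ K r) (hK : ∀ᶠ r in atTop, K r ≤ M + A * ψ r)
    (hψ : ∀ᶠ r in atTop, c ≤ ψ r) : K =O[atTop] ψ := by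
  refine IsBigO.of_bound (|M| / c + |A|) ?_
  filter_upwards [hK₀, hK, hψ] with r hK₀ hK hψ
  have hMψ : |M| ≤ |M| / c * ψ r := by
    rw [div_mul_eq_mul_div, le_div_iff₀ hc]
    exact mul_le_mul_of_nonneg_left hψ (abs_nonneg M)
  rw [Real.norm_of_nonneg hK₀, Real.norm_of_nonneg (hc.le.trans hψ)]
  nlinarith [le_abs_self M, le_abs_self A, abs_nonneg A, neg_abs_le A]

theorem isBigO_of_supersolution {K g ψ h : ℝ → ℝ} {p q ε : ℝ} (hp : 0 < p) (hp1 : p < 1)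
    (hq : 0 < q) (hq1 : q < 1) (hε : 0 < ε) (hK₀ : ∀ r, 0 < r → 0 ≤ K r)
    (hK : ∀ T, BddAbove (K '' Ioc 0 T)) (hrec : ∀ r, 1 ≤ r → K r ≤ K (p * r) + K (q * r) + g r)
    (hψ : ∀ r, 0 < r → 0 ≤ ψ r)
    (hdefect : ∀ᶠ r in atTop, ψ (p * r) + ψ (q * r) + ε * h r ≤ ψ r)
    (hh : ∃ c > 0, ∀ᶠ r in atTop, c ≤ h r) (hg : g =O[atTop] h) : K =O[atTop] ψ := by
  obtain ⟨c, hc, hch⟩ := hh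
  obtain ⟨D, hD, hgD⟩ := hg.exists_pos
  obtain ⟨R, hR⟩ := eventually_atTop.1 (hdefect.and (hch.and hgD.bound))
  obtain ⟨M, hM⟩ := hK (max R 1)
  -- `A * ε * h` absorbs both `g ≤ D * h` and the constant `max M 0 ≤ max M 0 / c * h`.
  set A := (D + max M 0 / c) / ε
  have hsuper : ∀ r, max R 1 < r → A * ψ (p * r) + A * ψ (q * r) + g r + max M 0 ≤ A * ψ r := by
    intro r hr
    obtain ⟨hd, hcr, hgr⟩ := hR r (le_max_left R 1 |>.trans hr.le)
    have hh₀ : 0 < h r := hc.trans_le hcr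
    have hgh : g r ≤ D * h r := by
      simpa [abs_of_pos hh₀] using (le_abs_self (g r)).trans hgr
    have hMh : max M 0 ≤ max M 0 / c * h r := by
      rw [div_mul_eq_mul_div, le_div_iff₀ hc]
      exact mul_le_mul_of_nonneg_left hcr (le_max_right M 0)
    have hAε : A * ε = D + max M 0 / c := div_mul_cancel₀ _ hε.ne'
    nlinarith [mul_le_mul_of_nonneg_left hd (by positivity : 0 ≤ A)]
  have hbound := le_add_of_supersolution hp hp1 hq hq1 (by positivity)
    (fun r hr => hrec r ((le_max_right R 1).trans hr.le))
    (fun r hr => (hM ⟨r, hr, rfl⟩).trans (le_max_left M 0))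
    (fun r hr => mul_nonneg (by positivity) (hψ r hr.1)) hsuper
  refine isBigO_of_le_add_mul (M := max M 0) (A := A) (mul_pos hε hc) ?_ ?_ ?_
  · filter_upwards [eventually_gt_atTop 0] with r hr using hK₀ r hr
  · filter_upwards [eventually_gt_atTop 0] with r hr using hbound r hr
  · filter_upwards [hdefect, hch, eventually_gt_atTop 0] with r hd hcr hr
    nlinarith [hψ _ (mul_pos hp hr), hψ _ (mul_pos hq hr)]

theorem isBigO_const_mul_add_one {φ h : ℝ → ℝ} (C : ℝ) (hφ : φ =O[atTop] h)
    (hh : ∃ c > 0, ∀ᶠ r in atTop, c ≤ h r) : (fun r => C * (φ r + 1)) =O[atTop] h := by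
  refine (hφ.add ((isBigO_const_left_iff_pos_le_norm one_ne_zero).2 ?_)).const_mul_left C
  obtain ⟨c, hc, hch⟩ := hh
  exact ⟨c, hc, hch.mono fun r hr => hr.trans (le_abs_self _)⟩

theorem continuousOn_rpow_mul_log_one_add_rpow (α β : ℝ) :
    ContinuousOn (fun r : ℝ => r ^ α * Real.log (1 + r) ^ β) (Ioi 0) := by
  have hlog : ContinuousOn (fun r => Real.log (1 + r)) (Ioi 0) :=
    ContinuousOn.log (by fun_prop) fun r (hr : 0 < r) => by linarith
  exact (ContinuousOn.rpow_const (by fun_prop) fun r (hr : 0 < r) => Or.inl hr.ne').mul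
    (hlog.rpow_const fun r (hr : 0 < r) => Or.inl (Real.log_pos (by linarith)).ne')

theorem exists_pos_eventually_le_rpow_mul_log_rpow {α β : ℝ} (hα : 0 ≤ α) (hβ : 0 ≤ β) :
    ∃ c > 0, ∀ᶠ r in atTop, c ≤ r ^ α * Real.log (1 + r) ^ β := by
  refine ⟨Real.log 2 ^ β, Real.rpow_pos_of_pos (Real.log_pos one_lt_two) β, ?_⟩
  filter_upwards [eventually_ge_atTop 1] with r hr
  have hlog : Real.log 2 ^ β ≤ Real.log (1 + r) ^ β :=
    Real.rpow_le_rpow (Real.log_nonneg one_le_two) (Real.log_le_log two_pos (by linarith)) hβ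
  nlinarith [Real.one_le_rpow hr hα, Real.rpow_nonneg (Real.log_nonneg one_le_two) β]

theorem isBigO_log_one_add_log : (fun r => Real.log (1 + r)) =O[atTop] Real.log := by
  refine IsBigO.of_bound 2 ?_
  filter_upwards [eventually_ge_atTop 2] with r hr
  have hlog : Real.log (1 + r) ≤ Real.log (r * r) := Real.log_le_log (by linarith) (by nlinarith)
  rw [Real.log_mul (by positivity) (by positivity)] at hlog
  rw [Real.norm_of_nonneg (Real.log_nonneg (by linarith)),
    Real.norm_of_nonneg (Real.log_nonneg (by linarith))]
  linarith

theorem isBigO_log_one_add_rpow {β : ℝ} (hβ : 0 ≤ β) :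
    (fun r => Real.log (1 + r) ^ β) =O[atTop] fun r => Real.log r ^ β :=
  isBigO_log_one_add_log.rpow hβ <| by
    filter_upwards [eventually_ge_atTop 1] with r hr using Real.log_nonneg hr

theorem isBigO_rpow_mul_log_rpow_rpow {α β γ : ℝ} (hαγ : α < γ) (hβ : 0 ≤ β) :
    (fun r => r ^ α * Real.log (1 + r) ^ β) =O[atTop] fun r => r ^ γ := by
  have hlog := (isBigO_log_one_add_rpow hβ).trans
    (isLittleO_log_rpow_rpow_atTop β (sub_pos.2 hαγ)).isBigO
  refine ((isBigO_refl (fun r : ℝ => r ^ α) atTop).mul hlog).congr' EventuallyEq.rfl ?_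
  filter_upwards [eventually_gt_atTop 0] with r hr
  rw [← Real.rpow_add hr, add_sub_cancel]

theorem one_lt_rpow_add_rpow {p q γ : ℝ} (hp : 0 < p) (hq : 0 < q) (hpq : p + q = 1)
    (hγ : γ < 1) : 1 < p ^ γ + q ^ γ := by
  have hp' : p < p ^ γ := by
    simpa using Real.rpow_lt_rpow_of_exponent_gt hp (by linarith) hγ
  have hq' : q < q ^ γ := by
    simpa using Real.rpow_lt_rpow_of_exponent_gt hq (by linarith) hγ
  linarith

theorem sub_rpow_add_one_nonneg {γ r : ℝ} (hγ0 : 0 ≤ γ) (hγ1 : γ ≤ 1) (hr : 0 ≤ r) :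
    0 ≤ r - r ^ γ + 1 := by
  rcases le_total r 1 with hr1 | hr1
  · linarith [Real.rpow_le_one hr hr1 hγ0]
  · linarith [Real.rpow_le_self_of_one_le hr1 hγ1]

theorem isBigO_sub_rpow_add_one {γ : ℝ} (hγ0 : 0 ≤ γ) (hγ1 : γ ≤ 1) :
    (fun r => r - r ^ γ + 1) =O[atTop] fun r : ℝ => r := by
  refine IsBigO.of_bound 2 ?_
  filter_upwards [eventually_ge_atTop 1] with r hr
  rw [Real.norm_of_nonneg (sub_rpow_add_one_nonneg hγ0 hγ1 (by linarith)),
    Real.norm_of_nonneg (by linarith)]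
  linarith [Real.one_le_rpow hr hγ0]

theorem eventually_sub_rpow_add_one_defect {p q γ : ℝ} (hp : 0 ≤ p) (hq : 0 ≤ q)
    (hpq : p + q = 1) (hγ : 0 < γ) (hs : 1 < p ^ γ + q ^ γ) :
    ∀ᶠ r in atTop, (p * r - (p * r) ^ γ + 1) + (q * r - (q * r) ^ γ + 1)
      + (p ^ γ + q ^ γ - 1) / 2 * r ^ γ ≤ r - r ^ γ + 1 := by
  filter_upwards [(tendsto_rpow_atTop hγ).eventually_ge_atTop (2 / (p ^ γ + q ^ γ - 1)),
    eventually_ge_atTop 0] with r hrγ hr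
  rw [div_le_iff₀ (by linarith)] at hrγ
  rw [Real.mul_rpow hp hr, Real.mul_rpow hq hr]
  nlinarith

theorem log_one_add_mul_le {c m r : ℝ} (hc : 0 ≤ c) (hcm : c ≤ m) (hm : m ≤ 1) (hr : 1 ≤ r) :
    Real.log (1 + c * r) ≤ Real.log (1 + r) - Real.log (2 / (1 + m)) := by
  have hle : 1 + c * r ≤ (1 + m) / 2 * (1 + r) := by nlinarith
  rw [Real.log_div two_ne_zero (by linarith)]
  have := Real.log_le_log (by positivity) hle
  rw [Real.log_mul (by linarith) (by linarith), Real.log_div (by linarith) two_ne_zero] at this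
  linarith

theorem mul_log_one_add_rpow_add_one_le {β c m r : ℝ} (hβ : 0 ≤ β) (hc : 0 ≤ c)
    (hcm : c ≤ m) (hm : m ≤ 1) (hr : 1 ≤ r) :
    c * r * Real.log (1 + c * r) ^ (β + 1)
      ≤ c * (r * Real.log (1 + r) ^ β * (Real.log (1 + r) - Real.log (2 / (1 + m)))) := by
  have hshift := log_one_add_mul_le hc hcm hm hr
  have hx : 0 ≤ Real.log (1 + c * r) := Real.log_nonneg (by nlinarith)
  have hδ : 0 ≤ Real.log (2 / (1 + m)) :=
    Real.log_nonneg (by rw [le_div_iff₀ (by linarith)]; linarith)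
  have hL : 0 ≤ Real.log (1 + r) ^ β := Real.rpow_nonneg (Real.log_nonneg (by linarith)) β
  have hpow : Real.log (1 + c * r) ^ β ≤ Real.log (1 + r) ^ β :=
    Real.rpow_le_rpow hx (by linarith) hβ
  rw [Real.rpow_add_one' hx (by linarith), mul_assoc c r, mul_assoc r]
  gcongr

theorem eventually_mul_log_rpow_add_one_defect {p q m β : ℝ} (hp : 0 ≤ p) (hq : 0 ≤ q)
    (hpq : p + q = 1) (hpm : p ≤ m) (hqm : q ≤ m) (hm : m ≤ 1) (hβ : 0 ≤ β) :
    ∀ᶠ r in atTop,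
      p * r * Real.log (1 + p * r) ^ (β + 1) + q * r * Real.log (1 + q * r) ^ (β + 1)
        + Real.log (2 / (1 + m)) * (r * Real.log (1 + r) ^ β)
        ≤ r * Real.log (1 + r) ^ (β + 1) := by
  filter_upwards [eventually_ge_atTop 1] with r hr
  have hLL : Real.log (1 + r) ^ (β + 1) = Real.log (1 + r) ^ β * Real.log (1 + r) :=
    Real.rpow_add_one' (Real.log_nonneg (by linarith)) (by linarith)
  linear_combination mul_log_one_add_rpow_add_one_le hβ hp hpm hm hr
    + mul_log_one_add_rpow_add_one_le hβ hq hqm hm hr - r * hLL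
    + r * Real.log (1 + r) ^ β * (Real.log (1 + r) - Real.log (2 / (1 + m))) * hpq

theorem rpow_add_rpow_lt_one {p q α : ℝ} (hp : 0 < p) (hq : 0 < q) (hpq : p + q = 1)
    (hα : 1 < α) : p ^ α + q ^ α < 1 := by
  have hp' : p ^ α < p := by
    simpa using Real.rpow_lt_rpow_of_exponent_gt hp (by linarith) hα
  have hq' : q ^ α < q := by
    simpa using Real.rpow_lt_rpow_of_exponent_gt hq (by linarith) hα
  linarith

theorem mul_rpow_mul_log_rpow_le {α β c r : ℝ} (hβ : 0 ≤ β) (hc0 : 0 ≤ c) (hc1 : c ≤ 1)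
    (hr : 0 ≤ r) :
    (c * r) ^ α * Real.log (1 + c * r) ^ β ≤ c ^ α * (r ^ α * Real.log (1 + r) ^ β) := by
  have hcr : c * r ≤ r := mul_le_of_le_one_left hr hc1
  have hlog : Real.log (1 + c * r) ^ β ≤ Real.log (1 + r) ^ β :=
    Real.rpow_le_rpow (Real.log_nonneg (by nlinarith))
      (Real.log_le_log (by nlinarith) (by linarith)) hβ
  rw [Real.mul_rpow hc0 hr, mul_assoc]
  gcongr

theorem eventually_rpow_mul_log_rpow_defect {p q α β : ℝ} (hp0 : 0 ≤ p) (hp1 : p ≤ 1)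
    (hq0 : 0 ≤ q) (hq1 : q ≤ 1) (hβ : 0 ≤ β) :
    ∀ᶠ r in atTop, (p * r) ^ α * Real.log (1 + p * r) ^ β + (q * r) ^ α * Real.log (1 + q * r) ^ β
      + (1 - (p ^ α + q ^ α)) * (r ^ α * Real.log (1 + r) ^ β) ≤ r ^ α * Real.log (1 + r) ^ β := by
  filter_upwards [eventually_ge_atTop 0] with r hr
  linarith [mul_rpow_mul_log_rpow_le (α := α) hβ hp0 hp1 hr,
    mul_rpow_mul_log_rpow_le (α := α) hβ hq0 hq1 hr]

theorem majorant_transfer_general (p q α β C : ℝ) (hp : 0 < p) (hp1 : p < 1) (hq : q = 1 - p)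
    (hβ : 0 ≤ β) (K : ℝ → ℝ)
    (hKnonneg : ∀ r : ℝ, 0 < r → 0 ≤ K r)
    (hKbdd : ∃ M : ℝ, ∀ r ∈ Set.Ioc (0 : ℝ) 1, K r ≤ M)
    (hrec : ∀ r : ℝ, 1 ≤ r →
      K r ≤ K (p * r) + K (q * r) + C * (r ^ α * Real.log (1 + r) ^ β + 1)) :
    (α < 1 → K =O[atTop] fun r : ℝ => r) ∧
    (α = 1 → K =O[atTop] fun r : ℝ => r * Real.log r ^ (β + 1)) ∧
    (1 < α → K =O[atTop] fun r : ℝ => r ^ α * Real.log r ^ β) := by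
  have hq0 : 0 < q := by linarith
  have hq1 : q < 1 := by linarith
  have hpq : p + q = 1 := by linarith
  have hg (T : ℝ) : BddAbove ((fun r => C * (r ^ α * Real.log (1 + r) ^ β + 1)) '' Icc 1 T) :=
    isCompact_Icc.bddAbove_image <| continuousOn_const.mul
      (((continuousOn_rpow_mul_log_one_add_rpow α β).mono fun r hr => one_pos.trans_le hr.1).add
        continuousOn_const)
  obtain ⟨M, hM⟩ := hKbdd
  have hK := bddAbove_image_Ioc_of_le_add hp hp1 hq0 hq1 ⟨M, forall_mem_image.2 hM⟩ hg hrec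
  refine ⟨fun hα => ?_, fun hα => ?_, fun hα => ?_⟩
  · obtain ⟨γ, hγ0, hαγ, hγ1⟩ : ∃ γ, 0 < γ ∧ α < γ ∧ γ < 1 :=
      ⟨(max α 0 + 1) / 2, by linarith [le_max_right α 0], by linarith [le_max_left α 0],
        by linarith [max_lt hα one_pos]⟩
    have hs := one_lt_rpow_add_rpow hp hq0 hpq hγ1
    have hh : ∃ c > (0 : ℝ), ∀ᶠ r : ℝ in atTop, c ≤ r ^ γ :=
      ⟨1, one_pos, (tendsto_rpow_atTop hγ0).eventually_ge_atTop 1⟩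
    exact (isBigO_of_supersolution (ψ := fun r => r - r ^ γ + 1) (h := fun r => r ^ γ)
      hp hp1 hq0 hq1 (half_pos (sub_pos.2 hs)) hKnonneg hK hrec
      (fun r hr => sub_rpow_add_one_nonneg hγ0.le hγ1.le hr.le)
      (eventually_sub_rpow_add_one_defect hp.le hq0.le hpq hγ0 hs) hh
      (isBigO_const_mul_add_one C (isBigO_rpow_mul_log_rpow_rpow hαγ hβ) hh)).trans
      (isBigO_sub_rpow_add_one hγ0.le hγ1.le)
  · subst hα
    simp only [Real.rpow_one] at hrec
    have hδ : 0 < Real.log (2 / (1 + max p q)) :=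
      Real.log_pos (by rw [lt_div_iff₀ (by positivity)]; linarith [max_lt hp1 hq1])
    have hh : ∃ c > 0, ∀ᶠ r in atTop, c ≤ r * Real.log (1 + r) ^ β := by
      simpa using exists_pos_eventually_le_rpow_mul_log_rpow zero_le_one hβ
    exact (isBigO_of_supersolution (ψ := fun r => r * Real.log (1 + r) ^ (β + 1))
      (h := fun r => r * Real.log (1 + r) ^ β) hp hp1 hq0 hq1 hδ hKnonneg hK hrec
      (fun r hr => mul_nonneg hr.le (Real.rpow_nonneg (Real.log_nonneg (by linarith)) _))
      (eventually_mul_log_rpow_add_one_defect hp.le hq0.le hpq (le_max_left p q)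
        (le_max_right p q) (max_lt hp1 hq1).le hβ) hh
      (isBigO_const_mul_add_one C (isBigO_refl _ _) hh)).trans
      ((isBigO_refl _ _).mul (isBigO_log_one_add_rpow (by linarith)))
  · have hh := exists_pos_eventually_le_rpow_mul_log_rpow (by linarith : 0 ≤ α) hβ
    exact (isBigO_of_supersolution (ψ := fun r => r ^ α * Real.log (1 + r) ^ β)
      (h := fun r => r ^ α * Real.log (1 + r) ^ β) hp hp1 hq0 hq1
      (sub_pos.2 (rpow_add_rpow_lt_one hp hq0 hpq hα)) hKnonneg hK hrec
      (fun r hr => mul_nonneg (Real.rpow_nonneg hr.le _)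
        (Real.rpow_nonneg (Real.log_nonneg (by linarith)) _))
      (eventually_rpow_mul_log_rpow_defect hp.le hp1.le hq0.le hq1.le hβ) hh
      (isBigO_const_mul_add_one C (isBigO_refl _ _) hh)).trans
      ((isBigO_refl _ _).mul (isBigO_log_one_add_rpow hβ))

/-- the majorant estimate for the trie functional inequality. -/
theorem majorant_transfer (p q α β C : ℝ) (hp : 0 < p) (hp1 : p < 1) (hq : q = 1 - p)
    (hβ : 0 ≤ β) (hC : 0 ≤ C) (K : ℝ → ℝ)
    (hKnonneg : ∀ r : ℝ, 0 < r → 0 ≤ K r)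
    (hKbdd : ∃ M : ℝ, ∀ r ∈ Set.Ioc (0 : ℝ) 1, K r ≤ M)
    (hrec : ∀ r : ℝ, 1 ≤ r →
      K r ≤ K (p * r) + K (q * r) + C * (r ^ α * Real.log (1 + r) ^ β + 1)) :
    (α < 1 → K =O[atTop] fun r : ℝ => r) ∧
    (α = 1 → K =O[atTop] fun r : ℝ => r * Real.log r ^ (β + 1)) ∧
    (1 < α → K =O[atTop] fun r : ℝ => r ^ α * Real.log r ^ β) :=
  majorant_transfer_general p q α β C hp hp1 hq hβ K hKnonneg hKbdd hrec
end
end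

section
/- The real-number identity ∑_{j≥1} 1/(2^j + 1) = ∑_{j≥1} (−1)^{j−1}/(2^j − 1) holds, where both series converge absolutely. -/
/-!
Both series are iterated sums of the absolutely convergent double series
`∑_{j,k ≥ 1} (-1)^(k-1) q^(jk)` at `q = 1/2`: summing the geometric series over `k` gives
`q^j / (1 + q^j) = 1 / (2^j + 1)`, summing over `j` gives `(-1)^(k-1) q^k / (1 - q^k) =
(-1)^(k-1) / (2^k - 1)`, so Fubini gives the identity. Each term of either series is bounded by the
absolute sum of its row (or column), which gives the absolute convergence.
-/

theorem Summable.norm_tsum_prod_factor {β γ E : Type*} [NormedAddCommGroup E]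
    {f : β × γ → E} (hf : Summable fun p => ‖f p‖) :
    Summable fun b => ‖∑' c, f (b, c)‖ :=
  hf.prod.of_nonneg_of_le (fun _ => norm_nonneg _)
    fun b => norm_tsum_le_tsum_norm (hf.prod_factor b)

section

variable {𝕜 : Type*} [NormedField 𝕜]

theorem tsum_pow_succ_of_norm_lt_one {x : 𝕜} (hx : ‖x‖ < 1) :
    ∑' n : ℕ, x ^ (n + 1) = x / (1 - x) := by
  simp_rw [pow_succ']
  rw [tsum_mul_left, tsum_geometric_of_norm_lt_one hx, div_eq_mul_inv]

/-- The double series `∑_{j,k ≥ 1} (-1)^(k-1) q^(jk)`, indexed from `0`. -/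
def lambertArray (q : 𝕜) (p : ℕ × ℕ) : 𝕜 :=
  (-1) ^ p.2 * q ^ ((p.1 + 1) * (p.2 + 1))

variable {q : 𝕜}

theorem norm_lambertArray_le (hq : ‖q‖ ≤ 1) (p : ℕ × ℕ) :
    ‖lambertArray q p‖ ≤ ‖q‖ ^ p.1 * ‖q‖ ^ p.2 := by
  rw [lambertArray, norm_mul, norm_pow, norm_neg, norm_one, one_pow, one_mul, norm_pow, ← pow_add]
  exact pow_le_pow_of_le_one (norm_nonneg q) hq (by nlinarith)

theorem summable_norm_lambertArray (hq : ‖q‖ < 1) :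
    Summable fun p => ‖lambertArray q p‖ := by
  have hgeom := summable_geometric_of_lt_one (norm_nonneg q) hq
  exact (hgeom.mul_of_nonneg hgeom (fun _ => by positivity) fun _ => by positivity).of_nonneg_of_le
    (fun _ => norm_nonneg _) (norm_lambertArray_le hq.le)

theorem tsum_lambertArray_row (hq : ‖q‖ < 1) (j : ℕ) :
    ∑' k, lambertArray q (j, k) = q ^ (j + 1) / (1 + q ^ (j + 1)) := by
  have hx : ‖-q ^ (j + 1)‖ < 1 := by
    rw [norm_neg, norm_pow]; exact pow_lt_one₀ (norm_nonneg q) hq j.succ_ne_zero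
  have hterm : ∀ k, lambertArray q (j, k) = -(-q ^ (j + 1)) ^ (k + 1) := fun k => by
    rw [lambertArray, neg_pow (q ^ (j + 1)), pow_mul]; ring
  rw [tsum_congr hterm, tsum_neg, tsum_pow_succ_of_norm_lt_one hx, sub_neg_eq_add, neg_div, neg_neg]

theorem tsum_lambertArray_col (hq : ‖q‖ < 1) (k : ℕ) :
    ∑' j, lambertArray q (j, k) = (-1) ^ k * (q ^ (k + 1) / (1 - q ^ (k + 1))) := by
  have hx : ‖q ^ (k + 1)‖ < 1 := by
    rw [norm_pow]; exact pow_lt_one₀ (norm_nonneg q) hq k.succ_ne_zero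
  have hterm : ∀ j, lambertArray q (j, k) = (-1) ^ k * (q ^ (k + 1)) ^ (j + 1) := fun j => by
    rw [lambertArray, ← pow_mul, mul_comm (j + 1)]
  rw [tsum_congr hterm, tsum_mul_left, tsum_pow_succ_of_norm_lt_one hx]

theorem summable_norm_pow_div_one_add_pow (hq : ‖q‖ < 1) :
    Summable fun j : ℕ => ‖q ^ (j + 1) / (1 + q ^ (j + 1))‖ := by
  simpa only [tsum_lambertArray_row hq] using (summable_norm_lambertArray hq).norm_tsum_prod_factor

theorem summable_norm_neg_one_pow_mul_pow_div_one_sub_pow (hq : ‖q‖ < 1) :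
    Summable fun k : ℕ => ‖(-1) ^ k * (q ^ (k + 1) / (1 - q ^ (k + 1)))‖ := by
  simpa only [Prod.swap_prod_mk, tsum_lambertArray_col hq] using
    (summable_norm_lambertArray hq).prod_symm.norm_tsum_prod_factor

variable [CompleteSpace 𝕜]

theorem tsum_pow_div_one_add_pow_eq (hq : ‖q‖ < 1) :
    ∑' j : ℕ, q ^ (j + 1) / (1 + q ^ (j + 1)) =
      ∑' k : ℕ, (-1) ^ k * (q ^ (k + 1) / (1 - q ^ (k + 1))) := by
  have hsum : Summable (Function.uncurry fun j k => lambertArray q (j, k)) :=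
    (summable_norm_lambertArray hq).of_norm
  calc ∑' j : ℕ, q ^ (j + 1) / (1 + q ^ (j + 1))
      = ∑' (j) (k), lambertArray q (j, k) := tsum_congr fun j => (tsum_lambertArray_row hq j).symm
    _ = ∑' (k) (j), lambertArray q (j, k) := hsum.tsum_comm.symm
    _ = _ := tsum_congr (tsum_lambertArray_col hq)

end

/-- the identity `∑_{j≥1} 1/(2^j + 1) = ∑_{j≥1} (−1)^{j−1}/(2^j − 1)`
(both sums reindexed by `j = m + 1`). -/
theorem trie_size_identity' :
    Summable (fun m : ℕ => |(1 : ℝ) / (2 ^ (m + 1) + 1)|) ∧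
    Summable (fun m : ℕ => |(-1 : ℝ) ^ m / (2 ^ (m + 1) - 1)|) ∧
    ∑' m : ℕ, (1 : ℝ) / (2 ^ (m + 1) + 1) = ∑' m : ℕ, (-1 : ℝ) ^ m / (2 ^ (m + 1) - 1) := by
  have hq : ‖(2⁻¹ : ℝ)‖ < 1 := by norm_num
  have hpos (m : ℕ) :
      (1 : ℝ) / (2 ^ (m + 1) + 1) = 2⁻¹ ^ (m + 1) / (1 + 2⁻¹ ^ (m + 1)) := by
    rw [inv_pow]; field_simp
  have hneg (m : ℕ) : (-1 : ℝ) ^ m / (2 ^ (m + 1) - 1) =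
      (-1) ^ m * (2⁻¹ ^ (m + 1) / (1 - 2⁻¹ ^ (m + 1))) := by
    rw [inv_pow]; field_simp
  simp only [← Real.norm_eq_abs, hpos, hneg]
  exact ⟨summable_norm_pow_div_one_add_pow hq,
    summable_norm_neg_one_pow_mul_pow_div_one_sub_pow hq, tsum_pow_div_one_add_pow_eq hq⟩
end

section
/- For every real number b > 1, the identity ∑_{k≥1} (−1)^k·(k² − k − 1)/(k·(b^k − 1)) = ∑_{k≥1} (1/(b^k + 1)² + log(1 + b^{−k})) holds, where both series converge absolutely. -/
/-!
Write `x = b⁻¹` and expand `1 / (b ^ k - 1) = ∑_{n ≥ 1} x ^ (k n)`: both sides are the two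
iterated sums of the absolutely convergent double series `∑_{k, n ≥ 1} c_k x ^ (k n)`, where
`c_k = (-1) ^ k (k² - k - 1) / k`. Since `c_k = (-1) ^ k ((k - 1) - 1 / k)`, summing over `k` first
gives, with `y = x ^ n`, the derivative of the geometric series plus the logarithm series:
`∑_k c_k y ^ k = y² / (1 + y)² + log (1 + y)`, and `y² / (1 + y)² = 1 / (b ^ n + 1)²`.
-/

open Real

theorem summable_norm_tsum_prod_factor {β γ E : Type*} [SeminormedAddCommGroup E]
    {f : β × γ → E} (hf : Summable fun p => ‖f p‖) :
    Summable fun b => ‖∑' c, f (b, c)‖ :=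
  hf.prod.of_nonneg_of_le (fun _ => norm_nonneg _) fun b =>
    norm_tsum_le_tsum_norm (hf.prod_factor b)

theorem summable_norm_and_tsum_eq_of_hasSum_rows_cols {β γ E : Type*} [NormedAddCommGroup E]
    [CompleteSpace E] {f : β × γ → E} (hf : Summable fun p => ‖f p‖)
    {r : β → E} {s : γ → E} (hr : ∀ b, HasSum (fun c => f (b, c)) (r b))
    (hs : ∀ c, HasSum (fun b => f (b, c)) (s c)) :
    Summable (fun b => ‖r b‖) ∧ Summable (fun c => ‖s c‖) ∧ ∑' b, r b = ∑' c, s c := by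
  have hr' : r = fun b => ∑' c, f (b, c) := funext fun b => (hr b).tsum_eq.symm
  have hs' : s = fun c => ∑' b, f (b, c) := funext fun c => (hs c).tsum_eq.symm
  subst hr' hs'
  exact ⟨summable_norm_tsum_prod_factor hf,
    summable_norm_tsum_prod_factor (f := fun p => f p.swap) hf.prod_symm,
    (hf.of_norm.tsum_comm (f := fun b c => f (b, c))).symm⟩

theorem hasSum_pow_succ {K : Type*} [NormedDivisionRing K] {y : K} (hy : ‖y‖ < 1) :
    HasSum (fun n => y ^ (n + 1)) (y / (1 - y)) := by
  simpa only [pow_succ', div_eq_mul_inv] using (hasSum_geometric_of_norm_lt_one hy).mul_left y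

theorem summable_succ_mul_pow {R : Type*} [NormedRing R] [HasSummableGeomSeries R] {r : R}
    (hr : ‖r‖ < 1) : Summable fun m : ℕ => ((m : R) + 1) * r ^ (m + 1) := by
  simpa only [Nat.cast_add, Nat.cast_one, pow_one] using
    (summable_nat_add_iff (f := fun n : ℕ => (n : R) ^ 1 * r ^ n) 1).mpr
      (summable_pow_mul_geometric_of_norm_lt_one 1 hr)

-- `radixCoeff m` is `c_(m+1)`: indices are shifted so that all sums run over `ℕ`.
noncomputable def radixCoeff (m : ℕ) : ℝ :=
  (-1) ^ (m + 1) * (((m : ℝ) + 1) ^ 2 - ((m : ℝ) + 1) - 1) / ((m : ℝ) + 1)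

theorem abs_radixCoeff_le (m : ℕ) : |radixCoeff m| ≤ m + 1 := by
  have hm : (0 : ℝ) < m + 1 := by positivity
  rw [radixCoeff, abs_div, abs_mul, abs_pow, abs_neg, abs_one, one_pow, one_mul,
    abs_of_pos hm, div_le_iff₀ hm, abs_le]
  constructor <;> nlinarith

theorem radixCoeff_mul_pow (m : ℕ) (y : ℝ) :
    radixCoeff m * y ^ (m + 1) = -y * (m * (-y) ^ m) - (-y) ^ (m + 1) / (m + 1) := by
  have hm : (m : ℝ) + 1 ≠ 0 := by positivity
  rw [radixCoeff, neg_pow y, neg_pow y]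
  field_simp
  ring

theorem hasSum_radixCoeff_mul_pow {y : ℝ} (hy : |y| < 1) :
    HasSum (fun m => radixCoeff m * y ^ (m + 1)) (y ^ 2 / (1 + y) ^ 2 + log (1 + y)) := by
  have hy' : |-y| < 1 := by rwa [abs_neg]
  have hderiv := (hasSum_coe_mul_geometric_of_norm_lt_one (r := -y)
    (by rwa [Real.norm_eq_abs])).mul_left (-y)
  have hlog := Real.hasSum_pow_div_log_of_abs_lt_one hy'
  have hsum :
      y ^ 2 / (1 + y) ^ 2 + log (1 + y) = -y * (-y / (1 - -y) ^ 2) - -log (1 - -y) := by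
    simp only [sub_neg_eq_add]; ring
  rw [hsum, funext fun m => radixCoeff_mul_pow m y]
  exact hderiv.sub hlog

theorem summable_abs_radixCoeff_mul_pow_mul {x : ℝ} (hx : |x| < 1) :
    Summable fun p : ℕ × ℕ => |radixCoeff p.1 * x ^ ((p.1 + 1) * (p.2 + 1))| := by
  have hx0 : 0 ≤ |x| := abs_nonneg x
  have hdom := (summable_succ_mul_pow (r := |x|)
    (by rwa [Real.norm_eq_abs, abs_abs])).mul_of_nonneg (summable_geometric_of_lt_one hx0 hx)
      (fun m => by positivity) (fun n => by positivity)
  refine hdom.of_nonneg_of_le (fun _ => abs_nonneg _) fun ⟨m, n⟩ => ?_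
  calc |radixCoeff m * x ^ ((m + 1) * (n + 1))|
        = |radixCoeff m| * |x| ^ ((m + 1) * (n + 1)) := by rw [abs_mul, abs_pow]
    _ ≤ ((m : ℝ) + 1) * (|x| ^ (m + 1) * |x| ^ n) := by
        gcongr
        · exact abs_radixCoeff_le m
        · rw [← pow_add]
          exact pow_le_pow_of_le_one hx0 hx.le (by nlinarith)
    _ = ((m : ℝ) + 1) * |x| ^ (m + 1) * |x| ^ n := by ring

theorem radixCoeff_lambert_identity {x : ℝ} (hx : |x| < 1) :
    Summable (fun m => |radixCoeff m * (x ^ (m + 1) / (1 - x ^ (m + 1)))|) ∧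
    Summable (fun n => |(x ^ (n + 1)) ^ 2 / (1 + x ^ (n + 1)) ^ 2 + log (1 + x ^ (n + 1))|) ∧
    ∑' m, radixCoeff m * (x ^ (m + 1) / (1 - x ^ (m + 1))) =
      ∑' n, ((x ^ (n + 1)) ^ 2 / (1 + x ^ (n + 1)) ^ 2 + log (1 + x ^ (n + 1))) := by
  have hpow : ∀ k : ℕ, |x ^ (k + 1)| < 1 := fun k => by
    rw [abs_pow]; exact pow_lt_one₀ (abs_nonneg x) hx k.succ_ne_zero
  have hrow : ∀ m : ℕ, HasSum (fun n => radixCoeff m * x ^ ((m + 1) * (n + 1)))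
      (radixCoeff m * (x ^ (m + 1) / (1 - x ^ (m + 1)))) := fun m => by
    simpa only [pow_mul] using (hasSum_pow_succ (hpow m)).mul_left (radixCoeff m)
  have hcol : ∀ n : ℕ, HasSum (fun m => radixCoeff m * x ^ ((m + 1) * (n + 1)))
      ((x ^ (n + 1)) ^ 2 / (1 + x ^ (n + 1)) ^ 2 + log (1 + x ^ (n + 1))) := fun n => by
    simpa only [mul_comm _ (n + 1), pow_mul] using hasSum_radixCoeff_mul_pow (hpow n)
  simpa only [Real.norm_eq_abs] using summable_norm_and_tsum_eq_of_hasSum_rows_cols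
    (f := fun p : ℕ × ℕ => radixCoeff p.1 * x ^ ((p.1 + 1) * (p.2 + 1)))
    (by simpa only [Real.norm_eq_abs] using summable_abs_radixCoeff_mul_pow_mul hx) hrow hcol

/-- for every `b > 1`,
`∑_{k≥1} (−1)^k (k²−k−1)/(k(b^k−1)) = ∑_{k≥1} (1/(b^k+1)² + log(1+b^{−k}))`
(both sums reindexed by `k = m + 1`). -/
theorem radix_sort_identity (b : ℝ) (hb : 1 < b) :
    Summable (fun m : ℕ => |(-1 : ℝ) ^ (m + 1) * (((m : ℝ) + 1) ^ 2 - ((m : ℝ) + 1) - 1) /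
      (((m : ℝ) + 1) * (b ^ (m + 1) - 1))|) ∧
    Summable (fun m : ℕ =>
      |1 / (b ^ (m + 1) + 1) ^ 2 + Real.log (1 + (b ^ (m + 1))⁻¹)|) ∧
    ∑' m : ℕ, (-1 : ℝ) ^ (m + 1) * (((m : ℝ) + 1) ^ 2 - ((m : ℝ) + 1) - 1) /
        (((m : ℝ) + 1) * (b ^ (m + 1) - 1)) =
      ∑' m : ℕ, (1 / (b ^ (m + 1) + 1) ^ 2 + Real.log (1 + (b ^ (m + 1))⁻¹)) := by
  have hb0 : 0 < b := by linarith
  have hx : |b⁻¹| < 1 := by rw [abs_inv, abs_of_pos hb0]; exact inv_lt_one_of_one_lt₀ hb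
  have hrow : ∀ m : ℕ, (-1 : ℝ) ^ (m + 1) * (((m : ℝ) + 1) ^ 2 - ((m : ℝ) + 1) - 1) /
      (((m : ℝ) + 1) * (b ^ (m + 1) - 1)) =
        radixCoeff m * (b⁻¹ ^ (m + 1) / (1 - b⁻¹ ^ (m + 1))) := fun m => by
    have : b ^ (m + 1) ≠ 0 := by positivity
    rw [radixCoeff, inv_pow]; field_simp
  have hcol : ∀ n : ℕ, 1 / (b ^ (n + 1) + 1) ^ 2 + log (1 + (b ^ (n + 1))⁻¹) =
      (b⁻¹ ^ (n + 1)) ^ 2 / (1 + b⁻¹ ^ (n + 1)) ^ 2 + log (1 + b⁻¹ ^ (n + 1)) := fun n => by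
    have : b ^ (n + 1) ≠ 0 := by positivity
    rw [inv_pow]; field_simp
  simp only [hrow, hcol]
  exact radixCoeff_lambert_identity hx
end

section
/- Let μ : ℕ → ℝ satisfy μ₀ = μ₁ = 0 and, for all n ≥ 2, (1 − 2^{1−n})·μ_n = n + 2^{−n}·∑_{k=1}^{n−1} C(n,k)·μ_k (the recurrence satisfied by the expected total number of coin flips in the fair-coin leader election procedure starting with n contenders). Then μ_n = 2n for all n ≥ 2. -/
/-! By strong induction, `μ k = 2 k` for `2 ≤ k < n` and `μ 1 = 0`, so the binomial sum in the
recurrence is `∑ C(n,k) 2k − 2n = n 2ⁿ − 4n`, using `∑ k C(n,k) = n 2ⁿ⁻¹`. The recurrence then reads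
`(1 − 2¹⁻ⁿ) μ n = 2n (1 − 2¹⁻ⁿ)`, and the coefficient `1 − 2¹⁻ⁿ` is nonzero for `n ≥ 2`. -/

open Finset

theorem Nat.sum_Ioo_mul_choose_add (n : ℕ) :
    ∑ k ∈ Ioo 0 n, k * n.choose k + n = n * 2 ^ (n - 1) := by
  have hIoo : ∑ k ∈ Ioo 0 n, k * n.choose k = ∑ k ∈ range n, k * n.choose k :=
    sum_subset (fun k hk => mem_range.2 (mem_Ioo.1 hk).2) fun k hk hk' => by
      obtain rfl : k = 0 := by simp_all
      simp
  rw [hIoo, ← Nat.sum_range_mul_choose, sum_range_succ, Nat.choose_self, mul_one]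

lemma one_sub_two_mul_inv_two_pow_ne_zero {n : ℕ} (hn : n ≠ 1) :
    (1 - 2 * ((2 : ℝ) ^ n)⁻¹) ≠ 0 := by
  rw [sub_ne_zero, ne_comm, ← div_eq_mul_inv, ne_eq, div_eq_one_iff_eq (by positivity)]
  exact fun h => hn ((Nat.pow_eq_self_iff one_lt_two).1 (by exact_mod_cast h.symm))

lemma sum_Ioo_choose_mul_of_eq_two_mul {μ : ℕ → ℝ} {n : ℕ} (hn : 2 ≤ n) (h1 : μ 1 = 0)
    (h : ∀ k, 2 ≤ k → k < n → μ k = 2 * k) :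
    ∑ k ∈ Ioo 0 n, (n.choose k : ℝ) * μ k = n * 2 ^ n - 4 * n := by
  have hdefect : ∑ k ∈ Ioo 0 n, (n.choose k : ℝ) * (μ k - 2 * k) = -2 * n := by
    rw [sum_eq_single 1 (fun k hk hk1 => ?_) (fun h1n => absurd (mem_Ioo.2 ⟨one_pos, hn⟩) h1n)]
    · simp [h1, mul_comm]
    · rw [h k (by grind) (mem_Ioo.1 hk).2, sub_self, mul_zero]
  have hlinear : ∑ k ∈ Ioo 0 n, (n.choose k : ℝ) * k + n = n * 2 ^ (n - 1) := by
    simp_rw [mul_comm (n.choose _ : ℝ)]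
    exact_mod_cast Nat.sum_Ioo_mul_choose_add n
  have hpow : (2 : ℝ) ^ n = 2 * 2 ^ (n - 1) := by
    rw [← pow_succ']; congr 1; omega
  simp only [mul_sub, sum_sub_distrib, mul_left_comm _ (2 : ℝ), ← mul_sum] at hdefect
  rw [hpow]
  linear_combination hdefect + 2 * hlinear

theorem leader_election_mean_general (μ : ℕ → ℝ) (hμ1 : μ 1 = 0)
    (hrec : ∀ n : ℕ, 2 ≤ n →
      (1 - 2 * ((2 : ℝ) ^ n)⁻¹) * μ n =
        (n : ℝ) + ((2 : ℝ) ^ n)⁻¹ * ∑ k ∈ Finset.Ioo 0 n, (n.choose k : ℝ) * μ k) :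
    ∀ n : ℕ, 2 ≤ n → μ n = 2 * n := by
  intro n
  induction n using Nat.strong_induction_on with
  | _ n ih =>
  intro hn
  have hrecn := hrec n hn
  rw [sum_Ioo_choose_mul_of_eq_two_mul hn hμ1 fun k hk hkn => ih k hkn hk] at hrecn
  refine mul_left_cancel₀ (one_sub_two_mul_inv_two_pow_ne_zero (by omega : n ≠ 1)) ?_
  rw [hrecn]
  field_simp
  ring

/-- the expected total number of coin flips in the fair-coin leader
election procedure with `n ≥ 2` contenders is exactly `2n`. -/
theorem leader_election_mean (μ : ℕ → ℝ) (hμ0 : μ 0 = 0) (hμ1 : μ 1 = 0)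
    (hrec : ∀ n : ℕ, 2 ≤ n →
      (1 - 2 * ((2 : ℝ) ^ n)⁻¹) * μ n =
        (n : ℝ) + ((2 : ℝ) ^ n)⁻¹ * ∑ k ∈ Finset.Ioo 0 n, (n.choose k : ℝ) * μ k) :
    ∀ n : ℕ, 2 ≤ n → μ n = 2 * n :=
  leader_election_mean_general μ hμ1 hrec
end
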